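/- In the first-order language with one binary relation symbol E and two unary predicate symbols p and q, there is no formula φ(x) with one free variable such that for every finite structure G and every element u of G: G satisfies φ(u) if and only if |{v : E(u,v) and p(v)}| ≥ |{v : E(u,v) and q(v)}|. Consequently, the K^# formula #p − #q ≥ 0 is not expressible in first-order logic over finite pointed graphs. -/

import Mathlib

open scoped Classical

/-- A finite labeled directed graph: edges and a valuation of atomic
propositions (indexed by `ℕ`) at each vertex. -/
structure LGraph (V : Type) [Fintype V] where
  edge : V → V → Bool
  label : V → ℕ → Bool

mutual
/-- Formulas of the logic `K^#`. -/
inductive KForm : Type where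
  | atom : ℕ → KForm
  | not : KForm → KForm
  | or : KForm → KForm → KForm
  | ge0 : KExpr → KForm
/-- Expressions of the logic `K^#`. -/
inductive KExpr : Type where
  | const : ℤ → KExpr
  | ind : KForm → KExpr
  | count : KForm → KExpr
  | add : KExpr → KExpr → KExpr
  | scale : ℤ → KExpr → KExpr
end

mutual
/-- Truth of a `K^#` formula at a pointed graph. -/
def KForm.sat {V : Type} [Fintype V] (G : LGraph V) (u : V) : KForm → Bool
  | .atom p => G.label u p
  | .not φ => !(KForm.sat G u φ)
  | .or φ ψ => KForm.sat G u φ || KForm.sat G u ψ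
  | .ge0 E => decide (0 ≤ KExpr.val G u E)
/-- Value of a `K^#` expression at a pointed graph. -/
def KExpr.val {V : Type} [Fintype V] (G : LGraph V) (u : V) : KExpr → ℤ
  | .const c => c
  | .ind φ => if KForm.sat G u φ then 1 else 0
  | .count φ =>
      ((Finset.univ.filter (fun v => G.edge u v = true ∧ KForm.sat G v φ = true)).card : ℤ)
  | .add E₁ E₂ => KExpr.val G u E₁ + KExpr.val G u E₂
  | .scale c E => c * KExpr.val G u E
end

open FirstOrder FirstOrder.Language

/-- The first-order language with one binary relation symbol `E` and two unary
predicate symbols `p` and `q`. -/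
def sigLang : FirstOrder.Language where
  Functions := fun _ => Empty
  Relations := fun n =>
    match n with
    | 1 => Fin 2
    | 2 => Unit
    | _ => Empty

/-- The unary predicate symbol `p`. -/
def pSym : sigLang.Relations 1 := (0 : Fin 2)

/-- The unary predicate symbol `q`. -/
def qSym : sigLang.Relations 1 := (1 : Fin 2)

/-- The binary relation symbol `E`. -/
def eSym : sigLang.Relations 2 := Unit.unit

/-- A labeled graph, viewed as a first-order structure for `sigLang`: `p` is
proposition `0`, `q` is proposition `1`, and `E` is the edge relation. -/
def graphStruct {V : Type} [Fintype V] (G : LGraph V) : sigLang.Structure V where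
  funMap := fun {n} f _ => f.elim
  RelMap := fun {n} r v =>
    match n, r, v with
    | 1, r, v => if r = (0 : Fin 2) then G.label (v 0) 0 = true else G.label (v 0) 1 = true
    | 2, _, v => G.edge (v 0) (v 1) = true

/-- The `K^#` formula `#p − #q ≥ 0`, with `p` the proposition `0` and `q` the
proposition `1`. -/
def cmpForm : KForm :=
  KForm.ge0 (KExpr.add (KExpr.count (KForm.atom 0))
    (KExpr.scale (-1) (KExpr.count (KForm.atom 1))))

/-!
Take the star whose centre has `a` successors labelled `p` and `b` labelled `q`. Its
relations only depend on the role (centre, `p`-leaf, `q`-leaf) of each vertex, so a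
partial bijection preserving roles is a partial isomorphism, and it can be extended by one
more pair as long as every role class has more elements than the bijection. Hence a formula
of quantifier depth `d` cannot tell the centre of the `(K, K)`-star from the centre of the
`(K, K + 1)`-star once `d < K`, although only the first satisfies `#p ≥ #q`.
-/

namespace FirstOrder.Language

variable {L : Language}

def BoundedFormula.quantDepth {α : Type*} : {n : ℕ} → L.BoundedFormula α n → ℕ
  | _, .falsum => 0
  | _, .equal _ _ => 0
  | _, .rel _ _ => 0
  | _, .imp φ ψ => max φ.quantDepth ψ.quantDepth
  | _, .all φ => φ.quantDepth + 1

theorem Term.exists_eq_var [L.IsRelational] {β : Type*} (t : L.Term β) : ∃ i, t = var i := by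
  cases t with
  | var i => exact ⟨i, rfl⟩
  | func f _ => exact isEmptyElim f

section ColorMatching

variable {M N C : Type*}

/-- The graph of a colour-preserving partial bijection: a position of the
Ehrenfeucht–Fraïssé game. -/
def IsColorMatching (cM : M → C) (cN : N → C) (P : Set (M × N)) : Prop :=
  ∀ p ∈ P, ∀ q ∈ P, cM p.1 = cN p.2 ∧ (p.1 = q.1 ↔ p.2 = q.2)

variable {cM : M → C} {cN : N → C} {P : Set (M × N)}

theorem IsColorMatching.singleton {x : M} {y : N} (h : cM x = cN y) :
    IsColorMatching cM cN {(x, y)} := by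
  rintro _ rfl _ rfl
  exact ⟨h, iff_of_true rfl rfl⟩

theorem IsColorMatching.swap (h : IsColorMatching cM cN P) :
    IsColorMatching cN cM (Prod.swap ⁻¹' P) :=
  fun _ hp _ hq => ⟨(h _ hp _ hq).1.symm, (h _ hp _ hq).2.symm⟩

theorem IsColorMatching.insert_of_compatible (h : IsColorMatching cM cN P) {x : M} {y : N}
    (hc : cM x = cN y) (hxy : ∀ p ∈ P, p.1 = x ↔ p.2 = y) :
    IsColorMatching cM cN (insert (x, y) P) := by
  intro p hp q hq
  rcases hp with rfl | hp <;> rcases hq with rfl | hq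
  · exact ⟨hc, iff_of_true rfl rfl⟩
  · exact ⟨hc, by simpa only [eq_comm] using hxy q hq⟩
  · exact ⟨(h p hp p hp).1, hxy p hp⟩
  · exact h p hp q hq

theorem IsColorMatching.exists_insert_right [Finite M] [Finite N] {K : ℕ}
    (h : IsColorMatching cM cN P) (hP : P.ncard < K)
    (hcard : ∀ c, min {x | cM x = c}.ncard K = min {y | cN y = c}.ncard K) (x : M) :
    ∃ y, IsColorMatching cM cN (insert (x, y) P) := by
  by_cases hx : ∃ p ∈ P, p.1 = x
  · obtain ⟨p, hp, rfl⟩ := hx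
    exact ⟨p.2, by rwa [Prod.mk.eta, Set.insert_eq_of_mem hp]⟩
  push Not at hx
  suffices ∃ y, cN y = cM x ∧ ∀ p ∈ P, p.2 ≠ y by
    obtain ⟨y, hcy, hy⟩ := this
    exact ⟨y, h.insert_of_compatible hcy.symm fun p hp => iff_of_false (hx p hp) (hy p hp)⟩
  -- Otherwise the colour class of `x` in `N` is covered by the matched pairs `Pc` of that
  -- colour, so it is smaller than `K`; by `hcard` the class in `M` has the same size, yet it
  -- contains the `Pc.ncard` matched elements and `x` besides.
  by_contra! hfull
  set Pc := {p ∈ P | cM p.1 = cM x}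
  have hN : {y | cN y = cM x} ⊆ Prod.snd '' Pc := fun y hy => by
    obtain ⟨p, hp, rfl⟩ := hfull y hy
    exact ⟨p, ⟨hp, (h p hp p hp).1.trans hy⟩, rfl⟩
  have hM : insert x (Prod.fst '' Pc) ⊆ {x' | cM x' = cM x} := by
    rintro _ (rfl | ⟨p, ⟨-, hp⟩, rfl⟩)
    exacts [rfl, hp]
  have hinj : Set.InjOn Prod.fst Pc := fun p hp q hq hpq =>
    Prod.ext hpq ((h p hp.1 q hq.1).2.mp hpq)
  have hx' : x ∉ Prod.fst '' Pc := by
    rintro ⟨p, ⟨hp, -⟩, hpx⟩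
    exact hx p hp hpx
  have hNc : {y | cN y = cM x}.ncard ≤ Pc.ncard :=
    (Set.ncard_le_ncard hN).trans (Set.ncard_image_le (Set.toFinite _))
  have hMc : Pc.ncard + 1 ≤ {x' | cM x' = cM x}.ncard := by
    calc Pc.ncard + 1 = (insert x (Prod.fst '' Pc)).ncard := by
          rw [Set.ncard_insert_of_notMem hx', hinj.ncard_image]
      _ ≤ _ := Set.ncard_le_ncard hM
  have hPc : Pc.ncard ≤ P.ncard := Set.ncard_le_ncard (Set.sep_subset _ _)
  have := hcard (cM x)
  omega

theorem IsColorMatching.exists_insert_left [Finite M] [Finite N] {K : ℕ}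
    (h : IsColorMatching cM cN P) (hP : P.ncard < K)
    (hcard : ∀ c, min {x | cM x = c}.ncard K = min {y | cN y = c}.ncard K) (y : N) :
    ∃ x, IsColorMatching cM cN (insert (x, y) P) := by
  have hswap : (Prod.swap ⁻¹' P).ncard = P.ncard := by
    rw [← Set.image_swap_eq_preimage_swap, Set.ncard_image_of_injective _ Prod.swap_injective]
  obtain ⟨x, hx⟩ := h.swap.exists_insert_right (hswap ▸ hP) (fun c => (hcard c).symm) y
  refine ⟨x, ?_⟩
  convert hx.swap using 1
  ext ⟨a, b⟩
  simp [and_comm]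

theorem _root_.Sum.elim_snoc_mem_insert {α : Type*} {n : ℕ} {v : α → M} {xs : Fin n → M}
    {v' : α → N} {xs' : Fin n → N} (hmem : ∀ i, (Sum.elim v xs i, Sum.elim v' xs' i) ∈ P)
    (x : M) (y : N) :
    ∀ i, (Sum.elim v (Fin.snoc xs x) i, Sum.elim v' (Fin.snoc xs' y) i) ∈ insert (x, y) P := by
  rintro (a | i)
  · exact Set.mem_insert_of_mem _ (hmem (.inl a))
  · induction i using Fin.lastCases with
    | last => simp
    | cast i => exact Set.mem_insert_of_mem _ (by simpa using hmem (.inr i))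

theorem BoundedFormula.realize_iff_of_isColorMatching [L.IsRelational] [Finite M] [Finite N]
    [L.Structure M] [L.Structure N]
    (hrel : ∀ {l} (R : L.Relations l) (xs : Fin l → M) (ys : Fin l → N),
      cM ∘ xs = cN ∘ ys → (Structure.RelMap R xs ↔ Structure.RelMap R ys))
    {K : ℕ} (hcard : ∀ c, min {x | cM x = c}.ncard K = min {y | cN y = c}.ncard K)
    {α : Type*} {n : ℕ} (φ : L.BoundedFormula α n) (hP : IsColorMatching cM cN P)
    (hK : P.ncard + φ.quantDepth ≤ K) {v : α → M} {xs : Fin n → M} {v' : α → N}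
    {xs' : Fin n → N} (hmem : ∀ i, (Sum.elim v xs i, Sum.elim v' xs' i) ∈ P) :
    φ.Realize v xs ↔ φ.Realize v' xs' := by
  induction φ generalizing P with
  | falsum => exact Iff.rfl
  | equal t₁ t₂ =>
    obtain ⟨i, rfl⟩ := t₁.exists_eq_var
    obtain ⟨j, rfl⟩ := t₂.exists_eq_var
    exact (hP _ (hmem i) _ (hmem j)).2
  | rel R ts =>
    choose σ hσ using fun k => (ts k).exists_eq_var
    simp only [BoundedFormula.Realize, hσ, Term.realize_var]
    exact hrel R _ _ (funext fun k => (hP _ (hmem (σ k)) _ (hmem (σ k))).1)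
  | imp φ ψ ihφ ihψ =>
    simp only [BoundedFormula.quantDepth] at hK
    exact imp_congr (ihφ hP (by omega) hmem) (ihψ hP (by omega) hmem)
  | all ψ ih =>
    simp only [BoundedFormula.quantDepth] at hK
    have hK' (p : M × N) : (insert p P).ncard + ψ.quantDepth ≤ K := by
      have := Set.ncard_insert_le p P
      omega
    simp only [BoundedFormula.realize_all]
    constructor
    · intro h y
      obtain ⟨x, hx⟩ := IsColorMatching.exists_insert_left hP (by omega) hcard y
      exact (ih hx (hK' _) (Sum.elim_snoc_mem_insert hmem x y)).1 (h x)
    · intro h x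
      obtain ⟨y, hy⟩ := IsColorMatching.exists_insert_right hP (by omega) hcard x
      exact (ih hy (hK' _) (Sum.elim_snoc_mem_insert hmem x y)).2 (h y)

end ColorMatching

end FirstOrder.Language

instance : sigLang.IsRelational := fun _ => (inferInstance : IsEmpty Empty)

section LabeledGraphs

variable {V : Type} [Fintype V]

def LGraph.comap {W : Type} [Fintype W] (G : LGraph W) (f : V → W) : LGraph V where
  edge u v := G.edge (f u) (f v)
  label v := G.label (f v)

theorem LGraph.relMap_comap_iff {V' W : Type} [Fintype V'] [Fintype W] (G : LGraph W)
    {f : V → W} {g : V' → W} {l : ℕ} (R : sigLang.Relations l) (xs : Fin l → V)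
    (ys : Fin l → V') (h : f ∘ xs = g ∘ ys) :
    Structure.RelMap (self := graphStruct (G.comap f)) R xs ↔
      Structure.RelMap (self := graphStruct (G.comap g)) R ys := by
  have h0 (i : Fin l) : f (xs i) = g (ys i) := congrFun h i
  match l, R with
  | 1, R =>
    show (if R = (0 : Fin 2) then G.label (f (xs 0)) 0 = true else G.label (f (xs 0)) 1 = true) ↔
      (if R = (0 : Fin 2) then G.label (g (ys 0)) 0 = true else G.label (g (ys 0)) 1 = true)
    rw [h0 0]
  | 2, _ =>
    show G.edge (f (xs 0)) (f (xs 1)) = true ↔ G.edge (g (ys 0)) (g (ys 1)) = true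
    rw [h0 0, h0 1]

theorem graphStruct_relMap_eSym (G : LGraph V) (u v : V) :
    Structure.RelMap (self := graphStruct G) eSym ![u, v] ↔ G.edge u v = true :=
  Iff.rfl

theorem graphStruct_relMap_pSym (G : LGraph V) (v : V) :
    Structure.RelMap (self := graphStruct G) pSym ![v] ↔ G.label v 0 = true :=
  iff_of_eq (if_pos rfl)

theorem graphStruct_relMap_qSym (G : LGraph V) (v : V) :
    Structure.RelMap (self := graphStruct G) qSym ![v] ↔ G.label v 1 = true :=
  iff_of_eq (if_neg (by decide : (1 : Fin 2) ≠ 0))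

theorem sat_cmpForm_iff (G : LGraph V) (u : V) :
    KForm.sat G u cmpForm = true ↔
      (letI := graphStruct G
       Nat.card {v // Structure.RelMap eSym ![u, v] ∧ Structure.RelMap pSym ![v]} ≥
        Nat.card {v // Structure.RelMap eSym ![u, v] ∧ Structure.RelMap qSym ![v]}) := by
  have hcount (p : V → Prop) [DecidablePred p] :
      ((Finset.univ.filter p).card : ℤ) = Nat.card {v // p v} := by
    rw [Nat.card_eq_fintype_card, Fintype.card_subtype]
  rw [cmpForm, KForm.sat, KExpr.val, KExpr.val, KExpr.val, KExpr.val, decide_eq_true_iff,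
    hcount, hcount]
  simp only [KForm.sat, graphStruct_relMap_eSym, graphStruct_relMap_pSym, graphStruct_relMap_qSym]
  omega

end LabeledGraphs

/-- Vertex `0` is the centre, `1` a `p`-leaf and `2` a `q`-leaf; `starGraph a b` blows the
two leaves up into `a` and `b` copies. -/
def starShape : LGraph (Fin 3) where
  edge i j := i == 0 && j != 0
  label i k := (k == 0 && i == 1) || (k == 1 && i == 2)

def starRole (a b : ℕ) (v : Fin (a + b + 1)) : Fin 3 :=
  if v.val = 0 then 0 else if v.val ≤ a then 1 else 2

def starGraph (a b : ℕ) : LGraph (Fin (a + b + 1)) :=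
  starShape.comap (starRole a b)

theorem starRole_zero (a b : ℕ) : starRole a b 0 = 0 := rfl

theorem Fin.ncard_preimage_val {n : ℕ} {s : Set ℕ} (hs : ∀ x ∈ s, x < n) :
    (Fin.val ⁻¹' s : Set (Fin n)).ncard = s.ncard :=
  Set.ncard_preimage_of_injective_subset_range Fin.val_injective fun x hx => ⟨⟨x, hs x hx⟩, rfl⟩

theorem ncard_starRole_eq (a b : ℕ) (c : Fin 3) :
    {v | starRole a b v = c}.ncard = ![1, a, b] c := by
  have hS : {v | starRole a b v = c} = Fin.val ⁻¹' ![{0}, Set.Icc 1 a, Set.Ioc a (a + b)] c := by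
    ext v
    have := v.isLt
    fin_cases c <;>
      simp only [starRole, Set.mem_ofPred_eq, Set.mem_preimage, Fin.isValue, Fin.zero_eta, Fin.mk_one,
        Fin.reduceFinMk, Matrix.cons_val_zero, Matrix.cons_val_one, Matrix.cons_val,
        Set.mem_singleton_iff, Set.mem_Icc, Set.mem_Ioc] <;>
      split_ifs <;> simp only [Fin.reduceEq, true_iff, false_iff] <;> omega
  rw [hS, Fin.ncard_preimage_val (fun x hx => by fin_cases c <;>
    simp only [Fin.zero_eta, Fin.mk_one, Fin.reduceFinMk, Matrix.cons_val_zero, Matrix.cons_val_one,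
      Matrix.cons_val, Set.mem_singleton_iff, Set.mem_Icc, Set.mem_Ioc] at hx <;> omega)]
  fin_cases c <;> simp [Set.ncard_eq_toFinset_card']

theorem natCard_starRole_eq (a b : ℕ) (c : Fin 3) :
    Nat.card {v // starRole a b v = c} = ![1, a, b] c :=
  (Nat.card_coe_set_eq _).trans (ncard_starRole_eq a b c)

theorem card_succ_pSym_starGraph (a b : ℕ) :
    (letI := graphStruct (starGraph a b)
     Nat.card {v : Fin (a + b + 1) // Structure.RelMap eSym ![0, v] ∧ Structure.RelMap pSym ![v]}) =
      a := by
  refine (Nat.card_congr (Equiv.subtypeEquivRight fun v => ?_)).trans (natCard_starRole_eq a b 1)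
  simp +contextual [graphStruct_relMap_eSym, graphStruct_relMap_pSym, starGraph, LGraph.comap, starShape,
    starRole_zero]

theorem card_succ_qSym_starGraph (a b : ℕ) :
    (letI := graphStruct (starGraph a b)
     Nat.card {v : Fin (a + b + 1) // Structure.RelMap eSym ![0, v] ∧ Structure.RelMap qSym ![v]}) =
      b := by
  refine (Nat.card_congr (Equiv.subtypeEquivRight fun v => ?_)).trans (natCard_starRole_eq a b 2)
  simp +contextual [graphStruct_relMap_eSym, graphStruct_relMap_qSym, starGraph, LGraph.comap, starShape,
    starRole_zero]

theorem realize_starGraph_iff (φ : sigLang.Formula (Fin 1)) {K a b a' b' : ℕ}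
    (hK : 1 + φ.quantDepth ≤ K) (ha : min a K = min a' K) (hb : min b K = min b' K) :
    (letI := graphStruct (starGraph a b); φ.Realize fun _ => (0 : Fin (a + b + 1))) ↔
      (letI := graphStruct (starGraph a' b'); φ.Realize fun _ => (0 : Fin (a' + b' + 1))) := by
  let := graphStruct (starGraph a b)
  let := graphStruct (starGraph a' b')
  refine BoundedFormula.realize_iff_of_isColorMatching starShape.relMap_comap_iff (K := K)
    (fun c => ?_) φ (IsColorMatching.singleton ((starRole_zero a b).trans (starRole_zero a' b').symm))
    (by simpa using hK) ?_
  · rw [ncard_starRole_eq, ncard_starRole_eq]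
    fin_cases c <;> simp [ha, hb]
  · rintro (_ | i)
    · rfl
    · exact i.elim0

theorem not_forall_realize_iff_card_ge (φ : sigLang.Formula (Fin 1)) :
    ¬ ∀ (n : ℕ) (G : LGraph (Fin n)) (u : Fin n),
      (letI := graphStruct G
       φ.Realize (fun _ => u) ↔
        Nat.card {v // Structure.RelMap eSym ![u, v] ∧ Structure.RelMap pSym ![v]} ≥
          Nat.card {v // Structure.RelMap eSym ![u, v] ∧ Structure.RelMap qSym ![v]}) := by
  intro hφ
  set K := 1 + φ.quantDepth
  have h₁ := hφ _ (starGraph K K) 0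
  have h₂ := hφ _ (starGraph K (K + 1)) 0
  rw [card_succ_pSym_starGraph, card_succ_qSym_starGraph] at h₁ h₂
  have h := realize_starGraph_iff φ (a := K) (b := K) (a' := K) (b' := K + 1) le_rfl rfl
    (by omega)
  exact absurd (h₂.1 (h.1 (h₁.2 le_rfl))) (by omega)

/-- No first-order formula `φ(x)` expresses, over finite structures, that `x` has at
least as many `E`-successors satisfying `p` as `E`-successors satisfying `q`;
consequently the `K^#` formula `#p − #q ≥ 0` is not expressible in first-order logic
over finite pointed graphs. -/
theorem no_FO_formula_for_count_comparison :
    (¬ ∃ φ : sigLang.Formula (Fin 1),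
      ∀ (M : Type) [Fintype M] [sigLang.Structure M] (u : M),
        (φ.Realize (fun _ => u) ↔
          Nat.card {v : M // Structure.RelMap eSym ![u, v] ∧ Structure.RelMap pSym ![v]} ≥
          Nat.card {v : M // Structure.RelMap eSym ![u, v] ∧ Structure.RelMap qSym ![v]})) ∧
    (¬ ∃ φ : sigLang.Formula (Fin 1),
      ∀ (n : ℕ) (G : LGraph (Fin n)) (u : Fin n),
        ((letI := graphStruct G; φ.Realize (fun _ => u)) ↔ KForm.sat G u cmpForm = true)) := by
  constructor
  · rintro ⟨φ, hφ⟩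
    exact not_forall_realize_iff_card_ge φ fun n G u => @hφ (Fin n) _ (graphStruct G) u
  · rintro ⟨φ, hφ⟩
    exact not_forall_realize_iff_card_ge φ fun n G u => (hφ n G u).trans (sat_cmpForm_iff G u)
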